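/- arXiv:1810.08805 — 2 statements merged into one kernel-verified Lean document; each statement's English description precedes it below -/
import Mathlib

section
/- Let $A_0$ be a real $p \times p$ matrix with spectral radius $\rho(A_0) < 1$, and let $(\beta_n)_{n \ge 0}$ be a real sequence with $\sum_{n \ge 1} \beta_n^2 < \infty$ and $\beta_n \to 0$. Define the $2p \times 2p$ matrices $\widetilde{A}_n = \begin{pmatrix} A_0 & \beta_n A_0 \\ \beta_n Id_p & Id_p \end{pmatrix}$ for $n \ge 1$ and $\widetilde{A}_0 = \begin{pmatrix} A_0 & A_0 \\ Id_p & Id_p \end{pmatrix}$. Then $\sup_{n \in \mathbb{N}} \big\| \widetilde{A}_{n-1}\widetilde{A}_{n-2}\cdots\widetilde{A}_0 \big\| < \infty$. -/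
/-!
Since `ρ(A₀) < 1`, Gelfand's formula gives `‖A₀ ^ k‖ ≤ C r ^ k` for some `r < 1`. Each block
column `(X, Z)` of the product evolves by `X' = A₀ (X + βₙ Z)`, `Z' = βₙ X + Z`, so `‖X‖` is
dominated by a sequence `x` with `x' ≤ r x + K |βₙ| z`, while `z = ‖Z‖` satisfies
`z' ≤ z + |βₙ| x`. Fix a horizon `N` and weights `λₖ = ∑_{k ≤ i < N} r ^ (i - k) |βᵢ|`, which
solve `λₖ = |βₖ| + r λₖ₊₁` and vanish at `N`. The energy `zₖ + λₖ xₖ` then grows at step `k`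
by a factor at most `1 + K |βₖ| λₖ₊₁`. By convexity of the square, the weights are square
summable uniformly in `N`, so `2ab ≤ a² + b²` bounds the product of these factors independently
of `N`; at time `N` the energy is `z_N`.
-/

open Filter Topology

attribute [local instance] Matrix.linftyOpNormedRing

attribute [local instance] Matrix.linftyOpNormedAlgebra

open scoped NNReal ENNReal

open Finset

theorem eq_pow_mul_add_sum_of_succ_eq {R : Type*} [Ring R] {a : R} {X F : ℕ → R}
    (h : ∀ n, X (n + 1) = a * X n + F n) (n : ℕ) :
    X n = a ^ n * X 0 + ∑ j ∈ range n, a ^ (n - 1 - j) * F j := by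
  induction n with
  | zero => simp
  | succ n ih =>
    have hpow : ∀ j ∈ range n, a * (a ^ (n - 1 - j) * F j) = a ^ (n - j) * F j := by
      intro j hj
      rw [← mul_assoc, ← pow_succ', show n - 1 - j + 1 = n - j by grind]
    rw [h, ih, mul_add, ← mul_assoc, ← pow_succ', mul_sum, sum_congr rfl hpow,
      sum_range_succ]
    simp [add_assoc]

theorem le_exp_sum_mul_of_succ_le {e δ : ℕ → ℝ} {N : ℕ} (he : ∀ k, 0 ≤ e k)
    (h : ∀ k < N, e (k + 1) ≤ (1 + δ k) * e k) :
    e N ≤ Real.exp (∑ k ∈ range N, δ k) * e 0 := by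
  suffices ∀ n ≤ N, e n ≤ Real.exp (∑ k ∈ range n, δ k) * e 0 from this N le_rfl
  intro n hn
  induction n with
  | zero => simp
  | succ n ih =>
    calc e (n + 1) ≤ (1 + δ n) * e n := h n hn
      _ ≤ Real.exp (δ n) * e n := by
        gcongr
        · exact he n
        · linarith [Real.add_one_le_exp (δ n)]
      _ ≤ Real.exp (δ n) * (Real.exp (∑ k ∈ range n, δ k) * e 0) := by gcongr; exact ih (by omega)
      _ = Real.exp (∑ k ∈ range (n + 1), δ k) * e 0 := by
        rw [sum_range_succ, Real.exp_add]; ring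

theorem le_max_of_succ_le_mul_add {x : ℕ → ℝ} {r d : ℝ} (hr0 : 0 ≤ r) (hr1 : r < 1)
    (h : ∀ n, x (n + 1) ≤ r * x n + d) (n : ℕ) : x n ≤ max (x 0) (d / (1 - r)) := by
  induction n with
  | zero => exact le_max_left _ _
  | succ n ih =>
    have hd : d ≤ (1 - r) * max (x 0) (d / (1 - r)) := by
      rw [← div_le_iff₀' (by linarith)]; exact le_max_right _ _
    nlinarith [h n]

def discountedSum (r : ℝ) (c : ℕ → ℝ) (N k : ℕ) : ℝ :=
  ∑ i ∈ range (N - k), r ^ i * c (k + i)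

section discountedSum

variable {r : ℝ} {c : ℕ → ℝ} {N k : ℕ}

@[simp]
theorem discountedSum_self : discountedSum r c N N = 0 := by
  simp [discountedSum]

theorem discountedSum_eq_add (hk : k < N) :
    discountedSum r c N k = c k + r * discountedSum r c N (k + 1) := by
  rw [discountedSum, discountedSum, show N - k = N - (k + 1) + 1 by omega, sum_range_succ',
    mul_sum]
  simp only [pow_zero, one_mul, add_zero, add_comm (c k)]
  congr 1
  refine sum_congr rfl fun i _ => ?_
  rw [pow_succ', show k + (i + 1) = k + 1 + i by ring]
  ring

theorem discountedSum_nonneg (hr : 0 ≤ r) (hc : ∀ n, 0 ≤ c n) : 0 ≤ discountedSum r c N k :=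
  sum_nonneg fun i _ => mul_nonneg (pow_nonneg hr i) (hc _)

theorem discountedSum_le {B : ℝ} (hr0 : 0 ≤ r) (hr1 : r < 1) (hB : 0 ≤ B)
    (hcB : ∀ n, c n ≤ B) : discountedSum r c N k ≤ B / (1 - r) := by
  calc discountedSum r c N k ≤ ∑ i ∈ range (N - k), B * r ^ i :=
        sum_le_sum fun i _ => by rw [mul_comm B]; gcongr; exact hcB _
    _ = B * ∑ i ∈ Ico 0 (N - k), r ^ i := by rw [← mul_sum, range_eq_Ico]
    _ ≤ B * (r ^ 0 / (1 - r)) := by gcongr; exact geom_sum_Ico_le_of_lt_one hr0 hr1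
    _ = B / (1 - r) := by ring

theorem sum_sq_discountedSum_le {S : ℝ} (hr0 : 0 ≤ r) (hr1 : r < 1)
    (hS : ∑ k ∈ range N, c k ^ 2 ≤ S) :
    ∑ k ∈ range N, discountedSum r c N (k + 1) ^ 2 ≤ S / (1 - r) ^ 2 := by
  have h1r : 0 < 1 - r := by linarith
  have hstep : ∀ k ∈ range N, discountedSum r c N k ^ 2 ≤
      c k ^ 2 / (1 - r) + r * discountedSum r c N (k + 1) ^ 2 := by
    intro k hk
    -- convexity of `t ↦ t ^ 2`: `c + r y = (1 - r) (c / (1 - r)) + r y`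
    rw [discountedSum_eq_add (mem_range.mp hk), div_add' _ _ _ h1r.ne', le_div_iff₀ h1r]
    nlinarith [mul_nonneg hr0 (sq_nonneg (c k - (1 - r) * discountedSum r c N (k + 1)))]
  have hshift : ∑ k ∈ range N, discountedSum r c N (k + 1) ^ 2 ≤
      ∑ k ∈ range N, discountedSum r c N k ^ 2 := by
    have h₁ := sum_range_succ' (fun k => discountedSum r c N k ^ 2) N
    have h₂ := sum_range_succ (fun k => discountedSum r c N k ^ 2) N
    rw [discountedSum_self, zero_pow two_ne_zero, add_zero] at h₂
    linarith [sq_nonneg (discountedSum r c N 0)]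
  set Q := ∑ k ∈ range N, discountedSum r c N (k + 1) ^ 2
  have hQ : Q ≤ S / (1 - r) + r * Q := calc
    Q ≤ ∑ k ∈ range N, discountedSum r c N k ^ 2 := hshift
    _ ≤ ∑ k ∈ range N, (c k ^ 2 / (1 - r) + r * discountedSum r c N (k + 1) ^ 2) :=
      sum_le_sum hstep
    _ = (∑ k ∈ range N, c k ^ 2) / (1 - r) + r * Q := by
      rw [sum_add_distrib, sum_div, mul_sum]
    _ ≤ S / (1 - r) + r * Q := by gcongr
  calc Q ≤ S / (1 - r) / (1 - r) := by rw [le_div_iff₀ h1r]; linarith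
    _ = S / (1 - r) ^ 2 := by rw [div_div, sq]

theorem sum_mul_discountedSum_le {S : ℝ} (hr0 : 0 ≤ r) (hr1 : r < 1)
    (hS : ∑ k ∈ range N, c k ^ 2 ≤ S) :
    ∑ k ∈ range N, c k * discountedSum r c N (k + 1) ≤ (S + S / (1 - r) ^ 2) / 2 :=
  calc ∑ k ∈ range N, c k * discountedSum r c N (k + 1)
      ≤ ∑ k ∈ range N, (c k ^ 2 + discountedSum r c N (k + 1) ^ 2) / 2 :=
        sum_le_sum fun k _ => by linarith [two_mul_le_add_sq (c k) (discountedSum r c N (k + 1))]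
    _ = (∑ k ∈ range N, c k ^ 2 + ∑ k ∈ range N, discountedSum r c N (k + 1) ^ 2) / 2 := by
        rw [← sum_add_distrib, sum_div]
    _ ≤ (S + S / (1 - r) ^ 2) / 2 := by
        gcongr
        exact sum_sq_discountedSum_le hr0 hr1 hS

end discountedSum

section coupled

variable {r K : ℝ} {c x z : ℕ → ℝ}

theorem le_exp_mul_of_coupled_succ_le (hr0 : 0 ≤ r) (hK : 0 ≤ K) (hc : ∀ n, 0 ≤ c n)
    (hx : ∀ n, 0 ≤ x n) (hz : ∀ n, 0 ≤ z n) (hxs : ∀ n, x (n + 1) ≤ r * x n + K * (c n * z n))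
    (hzs : ∀ n, z (n + 1) ≤ z n + c n * x n) (N : ℕ) :
    z N ≤ Real.exp (K * ∑ k ∈ range N, c k * discountedSum r c N (k + 1)) *
      (z 0 + discountedSum r c N 0 * x 0) := by
  set w := discountedSum r c N
  have hw : ∀ k, 0 ≤ w k := fun k => discountedSum_nonneg hr0 hc
  have hstep : ∀ k < N, z (k + 1) + w (k + 1) * x (k + 1) ≤
      (1 + K * (c k * w (k + 1))) * (z k + w k * x k) := by
    intro k hk
    have hwk : w k = c k + r * w (k + 1) := discountedSum_eq_add hk
    have hcross : 0 ≤ K * (c k * w (k + 1)) * (w k * x k) :=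
      mul_nonneg (mul_nonneg hK (mul_nonneg (hc k) (hw _))) (mul_nonneg (hw k) (hx k))
    calc z (k + 1) + w (k + 1) * x (k + 1)
        ≤ (z k + c k * x k) + w (k + 1) * (r * x k + K * (c k * z k)) :=
          add_le_add (hzs k) (mul_le_mul_of_nonneg_left (hxs k) (hw _))
      _ = (1 + K * (c k * w (k + 1))) * z k + w k * x k := by rw [hwk]; ring
      _ ≤ (1 + K * (c k * w (k + 1))) * (z k + w k * x k) := by nlinarith
  have := le_exp_sum_mul_of_succ_le (e := fun k => z k + w k * x k)
    (fun k => add_nonneg (hz k) (mul_nonneg (hw k) (hx k))) hstep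
  simpa [w, mul_sum] using this

theorem exists_bound_of_coupled_succ_le (hr0 : 0 ≤ r) (hr1 : r < 1) (hK : 0 ≤ K)
    (hc : ∀ n, 0 ≤ c n) (hx : ∀ n, 0 ≤ x n) (hz : ∀ n, 0 ≤ z n)
    (hc2 : Summable fun n => c n ^ 2) (hxs : ∀ n, x (n + 1) ≤ r * x n + K * (c n * z n))
    (hzs : ∀ n, z (n + 1) ≤ z n + c n * x n) : ∃ M, ∀ n, x n ≤ M ∧ z n ≤ M := by
  set S := ∑' n, c n ^ 2
  have hS0 : 0 ≤ S := tsum_nonneg fun _ => sq_nonneg _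
  have hS : ∀ N, ∑ k ∈ range N, c k ^ 2 ≤ S := fun N =>
    hc2.sum_le_tsum _ fun _ _ => sq_nonneg _
  have hcB : ∀ n, c n ≤ 1 + S := fun n => by
    nlinarith [hc2.le_tsum n fun _ _ => sq_nonneg _, sq_nonneg (c n - 1), hc n]
  set Z := Real.exp (K * ((S + S / (1 - r) ^ 2) / 2)) * (z 0 + (1 + S) / (1 - r) * x 0)
  have hzZ : ∀ N, z N ≤ Z := by
    intro N
    have hcw := sum_mul_discountedSum_le hr0 hr1 (hS N)
    have hw0 : discountedSum r c N 0 ≤ (1 + S) / (1 - r) :=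
      discountedSum_le hr0 hr1 (by positivity) hcB
    refine (le_exp_mul_of_coupled_succ_le hr0 hK hc hx hz hxs hzs N).trans ?_
    exact mul_le_mul (Real.exp_le_exp.mpr (mul_le_mul_of_nonneg_left hcw hK))
      (add_le_add_right (mul_le_mul_of_nonneg_right hw0 (hx 0)) _)
      (add_nonneg (hz 0) (mul_nonneg (discountedSum_nonneg hr0 hc) (hx 0))) (Real.exp_pos _).le
  have hxZ : ∀ n, x (n + 1) ≤ r * x n + K * ((1 + S) * Z) := fun n =>
    (hxs n).trans (add_le_add_right (mul_le_mul_of_nonneg_left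
      (mul_le_mul (hcB n) (hzZ n) (hz n) (by positivity)) hK) _)
  exact ⟨max (max (x 0) (K * ((1 + S) * Z) / (1 - r))) Z, fun n =>
    ⟨(le_max_of_succ_le_mul_add hr0 hr1 hxZ n).trans (le_max_left _ _),
      (hzZ n).trans (le_max_right _ _)⟩⟩

end coupled

theorem norm_le_of_succ_eq_mul_add {R : Type*} [NormedRing R] {a : R} {C r : ℝ}
    (ha : ∀ k, ‖a ^ k‖ ≤ C * r ^ k) {X F : ℕ → R} {x f : ℕ → ℝ}
    (hX : ∀ n, X (n + 1) = a * X n + F n) (hF : ∀ n, ‖F n‖ ≤ f n)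
    (hx0 : x 0 = C * ‖X 0‖) (hx : ∀ n, x (n + 1) = r * x n + C * f n) (n : ℕ) :
    ‖X n‖ ≤ x n := by
  rw [eq_pow_mul_add_sum_of_succ_eq hX n, eq_pow_mul_add_sum_of_succ_eq hx n, hx0]
  refine (norm_add_le _ _).trans (add_le_add ?_ ((norm_sum_le _ _).trans
    (sum_le_sum fun j _ => ?_)))
  · calc ‖a ^ n * X 0‖ ≤ ‖a ^ n‖ * ‖X 0‖ := norm_mul_le _ _
      _ ≤ C * r ^ n * ‖X 0‖ := mul_le_mul_of_nonneg_right (ha n) (norm_nonneg _)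
      _ = r ^ n * (C * ‖X 0‖) := by ring
  · calc ‖a ^ (n - 1 - j) * F j‖ ≤ ‖a ^ (n - 1 - j)‖ * ‖F j‖ := norm_mul_le _ _
      _ ≤ C * r ^ (n - 1 - j) * f j :=
        mul_le_mul (ha _) (hF j) (norm_nonneg _) ((norm_nonneg _).trans (ha _))
      _ = r ^ (n - 1 - j) * (C * f j) := by ring

theorem exists_norm_le_of_coupled_succ_eq {R : Type*} [NormedRing R] [NormedSpace ℝ R] {a : R}
    {C r : ℝ} (hr0 : 0 ≤ r) (hr1 : r < 1) (ha : ∀ k, ‖a ^ k‖ ≤ C * r ^ k) {b : ℕ → ℝ}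
    (hb : Summable fun n => b n ^ 2) {X Z : ℕ → R}
    (hX : ∀ n, X (n + 1) = a * (X n + b n • Z n)) (hZ : ∀ n, Z (n + 1) = b n • X n + Z n) :
    ∃ M, ∀ n, ‖X n‖ ≤ M ∧ ‖Z n‖ ≤ M := by
  have hC : 0 ≤ C := by simpa using (norm_nonneg _).trans (ha 0)
  set f : ℕ → ℝ := fun n => ‖a‖ * (|b n| * ‖Z n‖)
  obtain ⟨x, hx0, hx⟩ : ∃ x : ℕ → ℝ, x 0 = C * ‖X 0‖ ∧ ∀ n, x (n + 1) = r * x n + C * f n :=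
    ⟨fun n => Nat.rec (C * ‖X 0‖) (fun k xk => r * xk + C * f k) n, rfl, fun _ => rfl⟩
  have hXx : ∀ n, ‖X n‖ ≤ x n :=
    norm_le_of_succ_eq_mul_add ha (F := fun n => a * (b n • Z n)) (fun n => by rw [hX, mul_add])
      (fun n => (norm_mul_le _ _).trans (by rw [norm_smul, Real.norm_eq_abs])) hx0 hx
  obtain ⟨M, hM⟩ := exists_bound_of_coupled_succ_le hr0 hr1 (mul_nonneg hC (norm_nonneg a))
    (fun n => abs_nonneg (b n)) (fun n => (norm_nonneg _).trans (hXx n))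
    (fun n => norm_nonneg (Z n)) (by simpa only [sq_abs] using hb)
    (fun n => (hx n).le.trans_eq (by simp only [f]; ring))
    (fun n => by
      rw [hZ, add_comm]
      refine (norm_add_le _ _).trans (add_le_add_right ?_ _)
      rw [norm_smul, Real.norm_eq_abs]
      exact mul_le_mul_of_nonneg_left (hXx n) (abs_nonneg _))
  exact ⟨M, fun n => ⟨(hXx n).trans (hM n).1, (hM n).2⟩⟩

theorem spectrum.spectralRadius_lt_of_forall_norm_lt {A : Type*} [NormedRing A]
    [NormedAlgebra ℂ A] [CompleteSpace A] {a : A} {s : ℝ≥0} (hs : 0 < s)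
    (h : ∀ μ ∈ spectrum ℂ a, ‖μ‖ < s) : spectralRadius ℂ a < s := by
  rcases subsingleton_or_nontrivial A with _ | _
  · simpa using hs
  · exact spectrum.spectralRadius_lt_of_forall_lt a fun μ hμ => h μ hμ

theorem spectrum.exists_norm_pow_le_mul_pow {A : Type*} [NormedRing A] [NormedAlgebra ℂ A]
    [CompleteSpace A] {a : A} {s : ℝ≥0} (h : spectralRadius ℂ a < s) :
    ∃ C : ℝ, ∀ n, ‖a ^ n‖ ≤ C * s ^ n := by
  have hs : 0 < s := ENNReal.coe_pos.mp (zero_le.trans_lt h)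
  have hev : ∀ᶠ n : ℕ in atTop, ‖a ^ n‖ / s ^ n ≤ 1 := by
    filter_upwards [(pow_nnnorm_pow_one_div_tendsto_nhds_spectralRadius a).eventually_lt_const h,
      eventually_ge_atTop 1] with n hn hn1
    have hn₀ : (0 : ℝ) < n := by exact_mod_cast hn1
    rw [one_div, ← ENNReal.coe_rpow_of_nonneg _ (by positivity), ENNReal.coe_lt_coe,
      NNReal.rpow_inv_lt_iff hn₀, NNReal.rpow_natCast] at hn
    rw [div_le_one (by positivity)]
    exact_mod_cast hn.le
  obtain ⟨C, hC⟩ := (isBoundedUnder_of_eventually_le hev).bddAbove_range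
  exact ⟨C, fun n => (div_le_iff₀ (by positivity)).mp (hC (Set.mem_range_self n))⟩

namespace Matrix

variable {n : Type*} [Fintype n] [DecidableEq n]

theorem linfty_opNorm_map_eq {α β : Type*} [NormedRing α] [NormedRing β] (A : Matrix n n α)
    (f : α → β) (hf : ∀ x, ‖f x‖ = ‖x‖) : ‖A.map f‖ = ‖A‖ := by
  have hf' : ∀ x, ‖f x‖₊ = ‖x‖₊ := fun x => NNReal.eq (hf x)
  simp [linfty_opNorm_def, hf']

theorem exists_norm_pow_le_geometric (A : Matrix n n ℝ)
    (h : ∀ μ ∈ spectrum ℂ (A.map Complex.ofReal), ‖μ‖ < 1) :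
    ∃ C r : ℝ, 0 ≤ r ∧ r < 1 ∧ ∀ k, ‖A ^ k‖ ≤ C * r ^ k := by
  have hρ := spectrum.spectralRadius_lt_of_forall_norm_lt one_pos (by simpa using h)
  obtain ⟨s, hρs, hs1⟩ := ENNReal.lt_iff_exists_nnreal_btwn.mp hρ
  obtain ⟨C, hC⟩ := spectrum.exists_norm_pow_le_mul_pow hρs
  refine ⟨C, s, s.2, by exact_mod_cast hs1, fun k => ?_⟩
  rw [← linfty_opNorm_map_eq (A ^ k) Complex.ofReal Complex.norm_real]
  exact (Matrix.map_pow A Complex.ofRealHom k).symm ▸ hC k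

theorem linfty_opNorm_fromBlocks_le {α : Type*} [NormedRing α] (A B C D : Matrix n n α) :
    ‖fromBlocks A B C D‖ ≤ max (‖A‖ + ‖B‖) (‖C‖ + ‖D‖) := by
  have row : ∀ (M : Matrix n n α) i, ∑ j, ‖M i j‖₊ ≤ ‖M‖₊ := fun M i => by
    rw [linfty_opNNNorm_def]
    exact le_sup (f := fun i => ∑ j, ‖M i j‖₊) (mem_univ i)
  suffices ‖fromBlocks A B C D‖₊ ≤ max (‖A‖₊ + ‖B‖₊) (‖C‖₊ + ‖D‖₊) by exact_mod_cast this
  rw [linfty_opNNNorm_def]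
  refine Finset.sup_le fun i _ => ?_
  rcases i with i | i
  · simpa [Fintype.sum_sum_type] using Or.inl (add_le_add (row A i) (row B i))
  · simpa [Fintype.sum_sum_type] using Or.inr (add_le_add (row C i) (row D i))

theorem exists_norm_le_of_succ_eq_fromBlocks_mul {a : Matrix n n ℝ} {C r : ℝ} (hr0 : 0 ≤ r)
    (hr1 : r < 1) (ha : ∀ k, ‖a ^ k‖ ≤ C * r ^ k) {b : ℕ → ℝ} (hb : Summable fun n => b n ^ 2)
    {Q : ℕ → Matrix (n ⊕ n) (n ⊕ n) ℝ}
    (hQ : ∀ m, Q (m + 1) = fromBlocks a (b m • a) (b m • 1) 1 * Q m) :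
    ∃ M, ∀ m, ‖Q m‖ ≤ M := by
  have hblocks : ∀ m, Q (m + 1) = fromBlocks
      (a * ((Q m).toBlocks₁₁ + b m • (Q m).toBlocks₂₁))
      (a * ((Q m).toBlocks₁₂ + b m • (Q m).toBlocks₂₂))
      (b m • (Q m).toBlocks₁₁ + (Q m).toBlocks₂₁)
      (b m • (Q m).toBlocks₁₂ + (Q m).toBlocks₂₂) := fun m => by
    rw [hQ, ← fromBlocks_toBlocks (Q m), fromBlocks_multiply]
    simp [mul_add]
  obtain ⟨M₁, hM₁⟩ := exists_norm_le_of_coupled_succ_eq hr0 hr1 ha hb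
    (X := fun m => (Q m).toBlocks₁₁) (Z := fun m => (Q m).toBlocks₂₁)
    (fun m => by simp [hblocks m]) (fun m => by simp [hblocks m])
  obtain ⟨M₂, hM₂⟩ := exists_norm_le_of_coupled_succ_eq hr0 hr1 ha hb
    (X := fun m => (Q m).toBlocks₁₂) (Z := fun m => (Q m).toBlocks₂₂)
    (fun m => by simp [hblocks m]) (fun m => by simp [hblocks m])
  refine ⟨M₁ + M₂, fun m => ?_⟩
  rw [← fromBlocks_toBlocks (Q m)]
  exact (linfty_opNorm_fromBlocks_le _ _ _ _).trans
    (max_le (add_le_add (hM₁ m).1 (hM₂ m).1) (add_le_add (hM₁ m).2 (hM₂ m).2))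

end Matrix

theorem stmt3_general {p : ℕ} (A0 : Matrix (Fin p) (Fin p) ℝ)
    (hρ : ∀ μ ∈ spectrum ℂ (A0.map (Complex.ofReal)), ‖μ‖ < 1)
    (β : ℕ → ℝ) (hβsum : Summable fun n => β n ^ 2)
    (Atil : ℕ → Matrix (Fin p ⊕ Fin p) (Fin p ⊕ Fin p) ℝ)
    (hAtil : ∀ n : ℕ, 1 ≤ n → Atil n = Matrix.fromBlocks A0 (β n • A0) (β n • (1 : Matrix (Fin p) (Fin p) ℝ)) 1)
    (P : ℕ → Matrix (Fin p ⊕ Fin p) (Fin p ⊕ Fin p) ℝ)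
    (hPsucc : ∀ n, P (n + 1) = Atil n * P n) :
    ∃ C : ℝ, ∀ n, ‖P n‖ ≤ C := by
  obtain ⟨C, r, hr0, hr1, hpow⟩ := A0.exists_norm_pow_le_geometric hρ
  obtain ⟨M, hM⟩ := Matrix.exists_norm_le_of_succ_eq_fromBlocks_mul hr0 hr1 hpow
    ((summable_nat_add_iff 1).mpr hβsum) (Q := fun m => P (m + 1))
    (fun m => by rw [hPsucc, hAtil (m + 1) (by omega)])
  refine ⟨max ‖P 0‖ M, fun n => ?_⟩
  rcases n with _ | m
  · exact le_max_left _ _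
  · exact (hM m).trans (le_max_right _ _)

/-- Boundedness of the products `Ã_{n-1} ⋯ Ã_0` where
`Ã_n = [[A₀, βₙ A₀], [βₙ I, I]]` (for `n ≥ 1`), `Ã_0 = [[A₀, A₀], [I, I]]`,
`ρ(A₀) < 1`, `∑ βₙ² < ∞` and `βₙ → 0`. -/
theorem stmt3 {p : ℕ} (A0 : Matrix (Fin p) (Fin p) ℝ)
    (hρ : ∀ μ ∈ spectrum ℂ (A0.map (Complex.ofReal)), ‖μ‖ < 1)
    (β : ℕ → ℝ) (hβsum : Summable fun n => β n ^ 2) (hβ0 : Tendsto β atTop (𝓝 0))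
    (Atil : ℕ → Matrix (Fin p ⊕ Fin p) (Fin p ⊕ Fin p) ℝ)
    (hAtil0 : Atil 0 = Matrix.fromBlocks A0 A0 1 1)
    (hAtil : ∀ n : ℕ, 1 ≤ n → Atil n = Matrix.fromBlocks A0 (β n • A0) (β n • (1 : Matrix (Fin p) (Fin p) ℝ)) 1)
    (P : ℕ → Matrix (Fin p ⊕ Fin p) (Fin p ⊕ Fin p) ℝ)
    (hP0 : P 0 = 1) (hPsucc : ∀ n, P (n + 1) = Atil n * P n) :
    ∃ C : ℝ, ∀ n, ‖P n‖ ≤ C :=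
  stmt3_general A0 hρ β hβsum Atil hAtil P hPsucc
end

section
/- Suppose $\frac{1}{p \log n}\sum_{k=1}^n \big(1 - \frac{k^p}{(k+1)^p}\big)\frac{M_k M_k^*}{k} \to I(\theta)$ a.s. for a sequence of random vectors $M_k \in \mathbb{R}^p$, and $\frac{\langle M\rangle_k}{k} \to I(\theta)$ a.s. with $I(\theta)$ invertible. Then $\frac{1}{\log n}\sum_{k=1}^n \langle M\rangle_k^{-1} M_k M_k^* \langle M\rangle_k^{-1} \to I(\theta)^{-1}$ a.s. -/
/-!
Write `wₖ = 1 - kᵖ/(k+1)ᵖ` and `Xₖ = (wₖ/k) Mₖ Mₖ*`. The summand `⟨M⟩ₖ⁻¹ Mₖ Mₖ* ⟨M⟩ₖ⁻¹` is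
`Aₖ Xₖ Bₖ` with `Aₖ = wₖ⁻¹ ⟨M⟩ₖ⁻¹ → (p I(θ))⁻¹`, because `k wₖ → p`, and `Bₖ = k ⟨M⟩ₖ⁻¹ → I(θ)⁻¹`,
while `(log n)⁻¹ ∑ Xₖ → p I(θ)`. Each `Xₖ` is positive semidefinite, so its Frobenius norm is
at most its trace and `(log n)⁻¹ ∑ ‖Xₖ‖` stays bounded. A Toeplitz argument then lets us replace
`Aₖ` and `Bₖ` by their limits, and the limit is `(p I(θ))⁻¹ (p I(θ)) I(θ)⁻¹ = I(θ)⁻¹`.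
-/

open MeasureTheory ProbabilityTheory Filter Topology Matrix

open Finset

lemma tendsto_natCast_mul_one_sub_pow_div_succ_pow (p : ℕ) :
    Tendsto (fun k : ℕ => (k : ℝ) * (1 - (k : ℝ) ^ p / ((k : ℝ) + 1) ^ p)) atTop (𝓝 p) := by
  -- `1 - xᵖ = (1 - x) ∑_{i<p} xⁱ` with `x = k/(k+1)`, and `k (1 - x) = x`.
  have hx : Tendsto (fun k : ℕ => (k : ℝ) / (k + 1)) atTop (𝓝 1) :=
    tendsto_natCast_div_add_atTop 1
  have hsum := hx.mul (tendsto_finsetSum (range p) fun i _ => hx.pow i)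
  simp only [one_pow, sum_const, card_range, nsmul_eq_mul, mul_one, one_mul] at hsum
  refine hsum.congr fun k => ?_
  have hk : (k : ℝ) + 1 ≠ 0 := by positivity
  rw [← div_pow, ← neg_sub, ← geom_sum_mul]
  field_simp
  ring

lemma Matrix.inv_smul_of_ne_zero {n α : Type*} [Fintype n] [DecidableEq n] [Field α]
    {k : α} (hk : k ≠ 0) (A : Matrix n n α) : (k • A)⁻¹ = k⁻¹ • A⁻¹ := by
  by_cases hA : IsUnit A.det
  · exact inv_smul' A (Units.mk0 k hk) hA
  · have hkA : ¬IsUnit (k • A).det := by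
      simpa [det_smul, hk] using hA
    rw [nonsing_inv_apply_not_isUnit _ hA, nonsing_inv_apply_not_isUnit _ hkA, smul_zero]

lemma Matrix.tendsto_inv {ι : Type*} [Fintype ι] [DecidableEq ι] {α : Type*} {l : Filter α}
    {A : α → Matrix ι ι ℝ} {B : Matrix ι ι ℝ} (hB : IsUnit B) (h : Tendsto A l (𝓝 B)) :
    Tendsto (fun x => (A x)⁻¹) l (𝓝 B⁻¹) := by
  have hdet : B.det ≠ 0 := ((isUnit_iff_isUnit_det B).mp hB).ne_zero
  refine (continuousAt_matrix_inv B ?_).tendsto.comp h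
  simpa only [Ring.inverse_eq_inv'] using continuousAt_inv₀ hdet

section Toeplitz

variable {E : Type*} [SeminormedAddCommGroup E] {Y : ℕ → E} {t : ℕ → ℝ}

lemma sum_Icc_norm_le_of_norm_le_mul {N : ℕ} {δ : ℝ} (hδ : 0 ≤ δ) (ht : ∀ k, 0 ≤ t k)
    (hY : ∀ k, N ≤ k → ‖Y k‖ ≤ δ * t k) (n : ℕ) :
    ∑ k ∈ Icc 1 n, ‖Y k‖ ≤ ∑ k ∈ Icc 1 N, ‖Y k‖ + δ * ∑ k ∈ Icc 1 n, t k := by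
  rw [← sum_filter_add_sum_filter_not (Icc 1 n) (· < N), mul_sum]
  refine add_le_add ?_ ?_
  · refine sum_le_sum_of_subset_of_nonneg (fun k hk => ?_) fun _ _ _ => norm_nonneg _
    simp only [mem_filter, mem_Icc] at hk ⊢
    omega
  · calc ∑ k ∈ Icc 1 n with ¬k < N, ‖Y k‖ ≤ ∑ k ∈ Icc 1 n with ¬k < N, δ * t k :=
          sum_le_sum fun k hk => hY k (not_lt.mp (mem_filter.mp hk).2)
      _ ≤ ∑ k ∈ Icc 1 n, δ * t k :=
          sum_le_sum_of_subset_of_nonneg (filter_subset _ _) fun k _ _ => mul_nonneg hδ (ht k)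

lemma tendsto_inv_smul_sum_Icc_of_norm_le_mul [NormedSpace ℝ E] {a e : ℕ → ℝ}
    (ha : Tendsto a atTop atTop) (ht : ∀ k, 0 ≤ t k)
    (hT : IsBoundedUnder (· ≤ ·) atTop fun n => (a n)⁻¹ * ∑ k ∈ Icc 1 n, t k)
    (he : Tendsto e atTop (𝓝 0)) (hY : ∀ k, ‖Y k‖ ≤ e k * t k) :
    Tendsto (fun n => (a n)⁻¹ • ∑ k ∈ Icc 1 n, Y k) atTop (𝓝 0) := by
  obtain ⟨C, hC⟩ := hT
  rw [eventually_map] at hC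
  rw [NormedAddGroup.tendsto_nhds_zero]
  intro ε hε
  set δ := ε / (2 * (max C 0 + 1)) with hδdef
  have hδ : 0 < δ := by positivity
  obtain ⟨N, hN⟩ := eventually_atTop.mp (he.eventually_lt_const hδ)
  have hhead : Tendsto (fun n => (a n)⁻¹ * ∑ k ∈ Icc 1 N, ‖Y k‖) atTop (𝓝 0) := by
    simpa using (tendsto_inv_atTop_zero.comp ha).mul_const (∑ k ∈ Icc 1 N, ‖Y k‖)
  filter_upwards [hhead.eventually_lt_const (half_pos hε), hC, ha.eventually_gt_atTop 0]
    with n hn hCn han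
  have hsum := sum_Icc_norm_le_of_norm_le_mul hδ.le ht
    (fun k hk => (hY k).trans (mul_le_mul_of_nonneg_right (hN k hk).le (ht k))) n
  have hδC : δ * ((a n)⁻¹ * ∑ k ∈ Icc 1 n, t k) ≤ ε / 2 := by
    calc δ * ((a n)⁻¹ * ∑ k ∈ Icc 1 n, t k) ≤ δ * (max C 0 + 1) := by
          gcongr; exact hCn.trans ((le_max_left _ _).trans (le_add_of_nonneg_right zero_le_one))
      _ = ε / 2 := by rw [hδdef]; field_simp
  calc ‖(a n)⁻¹ • ∑ k ∈ Icc 1 n, Y k‖ ≤ (a n)⁻¹ * ∑ k ∈ Icc 1 n, ‖Y k‖ := by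
        rw [norm_smul, Real.norm_of_nonneg (inv_nonneg.mpr han.le)]
        gcongr
        exact norm_sum_le _ _
    _ ≤ (a n)⁻¹ * ∑ k ∈ Icc 1 N, ‖Y k‖ + δ * ((a n)⁻¹ * ∑ k ∈ Icc 1 n, t k) := by
        rw [mul_left_comm, ← mul_add]
        gcongr
    _ < ε := by linarith

lemma tendsto_inv_smul_sum_Icc_mul_mul {R : Type*} [SeminormedRing R] [NormedAlgebra ℝ R]
    {a : ℕ → ℝ} (ha : Tendsto a atTop atTop) {X A B : ℕ → R} {L A₀ B₀ : R}
    (hX : Tendsto (fun n => (a n)⁻¹ • ∑ k ∈ Icc 1 n, X k) atTop (𝓝 L))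
    (hXnorm : IsBoundedUnder (· ≤ ·) atTop fun n => (a n)⁻¹ * ∑ k ∈ Icc 1 n, ‖X k‖)
    (hA : Tendsto A atTop (𝓝 A₀)) (hB : Tendsto B atTop (𝓝 B₀)) :
    Tendsto (fun n => (a n)⁻¹ • ∑ k ∈ Icc 1 n, A k * X k * B k) atTop (𝓝 (A₀ * L * B₀)) := by
  set e : ℕ → ℝ := fun k => ‖A k - A₀‖ * ‖B k‖ + ‖A₀‖ * ‖B k - B₀‖
  have he : Tendsto e atTop (𝓝 0) := by
    have hA' : Tendsto (fun k => ‖A k - A₀‖) atTop (𝓝 0) := by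
      simpa using (hA.sub_const A₀).norm
    have hB' : Tendsto (fun k => ‖B k - B₀‖) atTop (𝓝 0) := by
      simpa using (hB.sub_const B₀).norm
    simpa using (hA'.mul hB.norm).add (hB'.const_mul ‖A₀‖)
  have hdiff : ∀ k, ‖A k * X k * B k - A₀ * X k * B₀‖ ≤ e k * ‖X k‖ := fun k =>
    calc ‖A k * X k * B k - A₀ * X k * B₀‖
        = ‖(A k - A₀) * X k * B k + A₀ * X k * (B k - B₀)‖ := by noncomm_ring
      _ ≤ ‖A k - A₀‖ * ‖X k‖ * ‖B k‖ + ‖A₀‖ * ‖X k‖ * ‖B k - B₀‖ :=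
        (norm_add_le _ _).trans (add_le_add (norm_mul₃_le ..) (norm_mul₃_le ..))
      _ = e k * ‖X k‖ := by ring
  have hmain := ((tendsto_const_nhds (x := A₀)).mul hX).mul (tendsto_const_nhds (x := B₀))
  have hrest := tendsto_inv_smul_sum_Icc_of_norm_le_mul ha (fun k => norm_nonneg (X k))
    hXnorm he hdiff
  refine (add_zero (A₀ * L * B₀) ▸ hmain.add hrest).congr fun n => ?_
  rw [mul_smul_comm, smul_mul_assoc, mul_sum, sum_mul, ← smul_add, ← sum_add_distrib]
  simp only [add_sub_cancel]

end Toeplitz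

section Frobenius

attribute [local instance] Matrix.frobeniusSeminormedAddCommGroup Matrix.frobeniusNormedRing
  Matrix.frobeniusNormedAlgebra

lemma Matrix.frobenius_norm_vecMulVec_self_le_trace {n : Type*} [Fintype n] (v : n → ℝ) :
    ‖vecMulVec v v‖ ≤ (vecMulVec v v).trace := by
  rw [trace_vecMulVec, vecMulVec_eq Unit]
  calc ‖replicateCol Unit v * replicateRow Unit v‖
      ≤ ‖replicateCol Unit v‖ * ‖replicateRow Unit v‖ := frobenius_norm_mul _ _
    _ = v ⬝ᵥ v := by
      rw [frobenius_norm_replicateCol, frobenius_norm_replicateRow, ← sq,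
        EuclideanSpace.real_norm_sq_eq]
      simp [dotProduct, sq]

theorem tendsto_inv_log_smul_sum_inv_mul_vecMulVec_mul_inv {p : ℕ} (hp : 1 ≤ p)
    {M : ℕ → Fin p → ℝ} {V : ℕ → Matrix (Fin p) (Fin p) ℝ} {I : Matrix (Fin p) (Fin p) ℝ}
    (hI : IsUnit I)
    (hM : Tendsto (fun n : ℕ => ((p : ℝ) * Real.log n)⁻¹ • ∑ k ∈ Icc 1 n,
      ((1 - (k : ℝ) ^ p / ((k : ℝ) + 1) ^ p) * (k : ℝ)⁻¹) • vecMulVec (M k) (M k))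
      atTop (𝓝 I))
    (hV : Tendsto (fun k : ℕ => (k : ℝ)⁻¹ • V k) atTop (𝓝 I)) :
    Tendsto (fun n : ℕ => (Real.log n)⁻¹ • ∑ k ∈ Icc 1 n,
      (V k)⁻¹ * vecMulVec (M k) (M k) * (V k)⁻¹) atTop (𝓝 I⁻¹) := by
  have hp0 : (p : ℝ) ≠ 0 := by positivity
  set w : ℕ → ℝ := fun k => 1 - (k : ℝ) ^ p / ((k : ℝ) + 1) ^ p with hw
  have hw_nonneg (k : ℕ) : 0 ≤ w k := by
    simp only [hw, ← div_pow, sub_nonneg]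
    exact pow_le_one₀ (by positivity) ((div_le_one (by positivity)).mpr (by linarith))
  have hw_ne_zero {k : ℕ} (hk : 1 ≤ k) : w k ≠ 0 := by
    simp only [hw, ← div_pow, sub_ne_zero]
    exact (pow_lt_one₀ (by positivity) ((div_lt_one (by positivity)).mpr (by linarith))
      (by omega)).ne'
  set X : ℕ → Matrix (Fin p) (Fin p) ℝ := fun k => (w k * (k : ℝ)⁻¹) • vecMulVec (M k) (M k)
  have hX : Tendsto (fun n : ℕ => (Real.log n)⁻¹ • ∑ k ∈ Icc 1 n, X k) atTop (𝓝 ((p : ℝ) • I)) :=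
    (hM.const_smul (p : ℝ)).congr fun n => by
      rw [smul_smul, mul_inv, ← mul_assoc, mul_inv_cancel₀ hp0, one_mul]
  have hXnorm : IsBoundedUnder (· ≤ ·) atTop fun n : ℕ =>
      (Real.log n)⁻¹ * ∑ k ∈ Icc 1 n, ‖X k‖ := by
    refine (((continuous_id.matrix_trace).tendsto _).comp hX).isBoundedUnder_le.mono_le
      (Eventually.of_forall fun n => ?_)
    simp only [Function.comp_apply, id, trace_smul, trace_sum, smul_eq_mul]
    have hlog := Real.log_natCast_nonneg n
    gcongr with k
    have hc : 0 ≤ w k * (k : ℝ)⁻¹ := mul_nonneg (hw_nonneg k) (by positivity)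
    rw [norm_smul, Real.norm_of_nonneg hc, trace_smul, smul_eq_mul]
    exact mul_le_mul_of_nonneg_left (frobenius_norm_vecMulVec_self_le_trace _) hc
  have hB : Tendsto (fun k : ℕ => (k : ℝ) • (V k)⁻¹) atTop (𝓝 I⁻¹) :=
    (Matrix.tendsto_inv hI hV).congr' <| (eventually_ne_atTop 0).mono fun k hk => by
      rw [inv_smul_of_ne_zero (inv_ne_zero (Nat.cast_ne_zero.mpr hk)), inv_inv]
  have hA : Tendsto (fun k : ℕ => (w k)⁻¹ • (V k)⁻¹) atTop (𝓝 ((p : ℝ)⁻¹ • I⁻¹)) :=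
    (((tendsto_natCast_mul_one_sub_pow_div_succ_pow p).inv₀ hp0).smul hB).congr'
      <| (eventually_ne_atTop 0).mono fun k hk => by
        have hk : (k : ℝ) ≠ 0 := Nat.cast_ne_zero.mpr hk
        show ((k : ℝ) * w k)⁻¹ • ((k : ℝ) • (V k)⁻¹) = (w k)⁻¹ • (V k)⁻¹
        simp only [smul_smul, mul_inv, mul_right_comm _ _ (k : ℝ), inv_mul_cancel₀ hk, one_mul]
  have hlim : (p : ℝ)⁻¹ • I⁻¹ * ((p : ℝ) • I) * I⁻¹ = I⁻¹ := by
    rw [smul_mul_smul_comm, inv_mul_cancel₀ hp0, one_smul,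
      nonsing_inv_mul I ((isUnit_iff_isUnit_det I).mp hI), Matrix.one_mul]
  refine hlim ▸ (tendsto_inv_smul_sum_Icc_mul_mul
    (Real.tendsto_log_atTop.comp tendsto_natCast_atTop_atTop) hX hXnorm hA hB).congr fun n => ?_
  congr 1
  refine sum_congr rfl fun k hk => ?_
  have hk : 1 ≤ k := (mem_Icc.mp hk).1
  have hk0 : (k : ℝ) ≠ 0 := by positivity
  have hscalar : (k : ℝ) * (w k * (k : ℝ)⁻¹ * (w k)⁻¹) = 1 := by field_simp [hw_ne_zero hk]
  simp only [X, smul_mul_assoc, mul_smul_comm, smul_smul, hscalar, one_smul]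

end Frobenius

theorem stmt18_general {Ω : Type*} [MeasureSpace Ω]
    {p : ℕ} (hp : 1 ≤ p)
    (M : ℕ → Ω → (Fin p → ℝ)) (V : ℕ → Ω → Matrix (Fin p) (Fin p) ℝ)
    (Iθ : Matrix (Fin p) (Fin p) ℝ) (hIθ : IsUnit Iθ)
    (h1 : ∀ᵐ ω ∂(ℙ : Measure Ω),
      Tendsto (fun n : ℕ => ((p : ℝ) * Real.log n)⁻¹ •
          ∑ k ∈ Finset.Icc 1 n,
            ((1 - (k : ℝ) ^ p / ((k : ℝ) + 1) ^ p) * (k : ℝ)⁻¹) •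
              vecMulVec (M k ω) (M k ω)) atTop (𝓝 Iθ))
    (h2 : ∀ᵐ ω ∂(ℙ : Measure Ω),
      Tendsto (fun k : ℕ => (k : ℝ)⁻¹ • V k ω) atTop (𝓝 Iθ)) :
    ∀ᵐ ω ∂(ℙ : Measure Ω),
      Tendsto (fun n : ℕ => (Real.log n)⁻¹ •
          ∑ k ∈ Finset.Icc 1 n,
            (V k ω)⁻¹ * vecMulVec (M k ω) (M k ω) * (V k ω)⁻¹) atTop (𝓝 Iθ⁻¹) := by
  filter_upwards [h1, h2] with ω h1ω h2ω
  exact tendsto_inv_log_smul_sum_inv_mul_vecMulVec_mul_inv hp hIθ h1ω h2ω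

/-- Transfer of the quadratic strong law from the martingale to the estimator:
if `(p log n)⁻¹ ∑_{k=1}^n (1 - kᵖ/(k+1)ᵖ) Mₖ Mₖ*/k → I(θ)` a.s. and
`⟨M⟩ₖ/k → I(θ)` a.s. with `I(θ)` invertible, then
`(log n)⁻¹ ∑_{k=1}^n ⟨M⟩ₖ⁻¹ Mₖ Mₖ* ⟨M⟩ₖ⁻¹ → I(θ)⁻¹` a.s. -/
theorem stmt18 {Ω : Type*} [MeasureSpace Ω] [IsProbabilityMeasure (ℙ : Measure Ω)]
    {p : ℕ} (hp : 1 ≤ p)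
    (M : ℕ → Ω → (Fin p → ℝ)) (V : ℕ → Ω → Matrix (Fin p) (Fin p) ℝ)
    (Iθ : Matrix (Fin p) (Fin p) ℝ) (hIθ : IsUnit Iθ)
    (h1 : ∀ᵐ ω ∂(ℙ : Measure Ω),
      Tendsto (fun n : ℕ => ((p : ℝ) * Real.log n)⁻¹ •
          ∑ k ∈ Finset.Icc 1 n,
            ((1 - (k : ℝ) ^ p / ((k : ℝ) + 1) ^ p) * (k : ℝ)⁻¹) •
              vecMulVec (M k ω) (M k ω)) atTop (𝓝 Iθ))
    (h2 : ∀ᵐ ω ∂(ℙ : Measure Ω),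
      Tendsto (fun k : ℕ => (k : ℝ)⁻¹ • V k ω) atTop (𝓝 Iθ)) :
    ∀ᵐ ω ∂(ℙ : Measure Ω),
      Tendsto (fun n : ℕ => (Real.log n)⁻¹ •
          ∑ k ∈ Finset.Icc 1 n,
            (V k ω)⁻¹ * vecMulVec (M k ω) (M k ω) * (V k ω)⁻¹) atTop (𝓝 Iθ⁻¹) :=
  stmt18_general hp M V Iθ hIθ h1 h2
end
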